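/- For all planar binary trees x, y in the Tamari poset, the over product satisfies x/y ≤ x\y. -/

import Mathlib

/-- Planar binary trees: a leaf `∘` or an ordered pair of planar binary trees. -/
inductive PBT : Type
  | leaf : PBT
  | node : PBT → PBT → PBT
deriving DecidableEq

namespace PBT

/-- The degree: the number of internal vertices. -/
def deg : PBT → ℕ
  | leaf => 0
  | node l r => deg l + deg r + 1

/-- The over product `x/y`: graft the root of `x` onto the leftmost leaf of `y`. -/
def overProd (x : PBT) : PBT → PBT
  | leaf => x
  | node l r => node (overProd x l) r

/-- The under product `x\y`: graft the root of `y` onto the rightmost leaf of `x`. -/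
def under : PBT → PBT → PBT
  | leaf, y => y
  | node l r, y => node l (under r y)

/-- Left-right reversal: swap the two subtrees at every internal vertex. -/
def rev : PBT → PBT
  | leaf => leaf
  | node l r => node (rev r) (rev l)

/-- `move x y` : `y` is obtained from `x` by one elementary Tamari move,
replacing a subtree `(a (b c))` by `((a b) c)` (a right rotation, going down). -/
inductive move : PBT → PBT → Prop
  | rot (a b c : PBT) : move (node a (node b c)) (node (node a b) c)
  | left {a a' : PBT} (b : PBT) : move a a' → move (node a b) (node a' b)
  | right (a : PBT) {b b' : PBT} : move b b' → move (node a b) (node a b')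

/-- The Tamari order: `x ≤ y` iff `x` is obtained from `y` by a sequence of
elementary moves. -/
def tle (x y : PBT) : Prop := Relation.ReflTransGen move y x

/-- The left comb of degree `n`. -/
def leftComb : ℕ → PBT
  | 0 => leaf
  | n+1 => node (leftComb n) leaf

/-- The right comb of degree `n`. -/
def rightComb : ℕ → PBT
  | 0 => leaf
  | n+1 => node leaf (rightComb n)

end PBT

/-!
Induction on `y`: for `y = node p q` we have `x/y = node (x/p) q ≤ node (x\p) q`, and
`node (x\p) q ≤ x\(node p q)` by one rotation at each vertex of the right branch of `x`.
-/

namespace PBT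

lemma under_leaf (x : PBT) : under x leaf = x := by
  induction x with
  | leaf => rfl
  | node l r _ ihr => rw [under, ihr]

lemma tle_refl (x : PBT) : tle x x := .refl

lemma tle_trans {a b c : PBT} (hab : tle a b) (hbc : tle b c) : tle a c := hbc.trans hab

lemma tle_of_move {a b : PBT} (h : move b a) : tle a b := .single h

lemma tle_node_left {a a' : PBT} (b : PBT) (h : tle a a') : tle (node a b) (node a' b) :=
  Relation.ReflTransGen.lift (fun t => node t b) (fun _ _ => move.left b) _ _ h

lemma tle_node_right (a : PBT) {b b' : PBT} (h : tle b b') : tle (node a b) (node a b') :=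
  Relation.ReflTransGen.lift (node a) (fun _ _ => move.right a) _ _ h

lemma node_under_tle_under_node (x p q : PBT) : tle (node (under x p) q) (under x (node p q)) := by
  induction x with
  | leaf => exact tle_refl _
  | node l r _ ihr =>
    exact tle_trans (tle_of_move (move.rot l (under r p) q)) (tle_node_right l ihr)

end PBT

/-- For all planar binary trees `x, y`, one has `x/y ≤ x\y` in the Tamari order. -/
theorem stmt8 (x y : PBT) : PBT.tle (x.overProd y) (x.under y) := by
  induction y generalizing x with
  | leaf => rw [PBT.under_leaf]; exact PBT.tle_refl x
  | node p q ihp _ =>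
    exact PBT.tle_trans (PBT.tle_node_left q (ihp x)) (PBT.node_under_tle_under_node x p q)
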